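/- For every ν > 0 and every z > 0, ∫₀^z t^{−1} J_ν(t)² dt < (1/(4πν²)) · (ez/(2ν))^{2ν}. -/

import Mathlib

open Real MeasureTheory

noncomputable section

/-- The Bessel function of the first kind, defined by its power series
`J_ν(x) = Σ_{m=0}^∞ ((−1)^m / (m! Γ(m+ν+1))) (x/2)^{2m+ν}`. -/
def besselJ (ν x : ℝ) : ℝ :=
  ∑' m : ℕ, ((-1 : ℝ) ^ m / (m.factorial * Real.Gamma ((m : ℝ) + ν + 1))) *
    (x / 2) ^ (2 * (m : ℝ) + ν)

/-!
Write `J_ν(x) = (x/2)^ν g(x²/4)` with `g(y) = Σ (-1)^m y^m / (m! Γ(m+ν+1))`. The entire function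
`g` solves `y g'' + (ν+1) g' + g = 0`, so the energy `g² + y g'²` has derivative
`-(2ν+1) g'² ≤ 0`; comparing with its value `Γ(ν+1)⁻²` at `0` gives
`J_ν(x)² ≤ (x/2)^{2ν} / Γ(ν+1)²`. Integrating, `∫₀^z t⁻¹ J_ν(t)² dt ≤ (z/2)^{2ν} / (2ν Γ(ν+1)²)`,
and the strict Stirling bound `Γ(ν+1) > √(2πν) (ν/e)^ν` turns this into the claim.

That Stirling bound holds for real arguments because `Γ(x+1) / (√(2πx) (x/e)^x)` strictly
decreases under `x ↦ x + 1` (equivalently `log (1 + 1/x) > 2/(2x+1)`) and tends to `1` along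
`x + n`, by Euler's limit formula for `Γ` and Stirling's formula for `n!`.
-/

open Filter Topology

def stirlingApprox (x : ℝ) : ℝ := √(2 * π * x) * (x / exp 1) ^ x

lemma stirlingApprox_pos {x : ℝ} (hx : 0 < x) : 0 < stirlingApprox x := by
  unfold stirlingApprox; positivity

lemma log_stirlingApprox {x : ℝ} (hx : 0 < x) :
    log (stirlingApprox x) = (log (2 * π) + log x) / 2 + x * (log x - 1) := by
  rw [stirlingApprox, log_mul (by positivity) (by positivity), log_sqrt (by positivity),
    log_rpow (by positivity), log_div hx.ne' (exp_pos 1).ne', log_exp,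
    log_mul (by positivity) hx.ne']

lemma two_div_two_mul_add_one_lt_log_one_add_inv {a : ℝ} (ha : 0 < a) :
    2 / (2 * a + 1) < log (1 + a⁻¹) := by
  have hsum := sum_le_hasSum (Finset.range 2) (fun k _ => by positivity)
    (hasSum_log_one_add_inv ha)
  norm_num [Finset.sum_range_succ] at hsum
  have hpos : 0 < ((2 * a + 1) ^ 3)⁻¹ := by positivity
  rw [div_eq_mul_inv]
  linarith

lemma mul_stirlingApprox_lt_stirlingApprox_add_one {x : ℝ} (hx : 0 < x) :
    (x + 1) * stirlingApprox x < stirlingApprox (x + 1) := by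
  have hx1 : 0 < x + 1 := by linarith
  rw [← log_lt_log_iff (mul_pos hx1 (stirlingApprox_pos hx)) (stirlingApprox_pos hx1),
    log_mul hx1.ne' (stirlingApprox_pos hx).ne', log_stirlingApprox hx, log_stirlingApprox hx1]
  have hlog := two_div_two_mul_add_one_lt_log_one_add_inv hx
  rw [show 1 + x⁻¹ = (x + 1) / x by field_simp, log_div hx1.ne' hx.ne',
    div_lt_iff₀ (by linarith)] at hlog
  nlinarith

lemma Gamma_div_stirlingApprox_add_one_lt {x : ℝ} (hx : 0 < x) :
    Gamma (x + 1 + 1) / stirlingApprox (x + 1) < Gamma (x + 1) / stirlingApprox x := by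
  have hx1 : 0 < x + 1 := by linarith
  calc Gamma (x + 1 + 1) / stirlingApprox (x + 1)
      < (x + 1) * Gamma (x + 1) / ((x + 1) * stirlingApprox x) := by
        rw [Gamma_add_one hx1.ne']
        exact div_lt_div_of_pos_left (by positivity [Gamma_pos_of_pos hx1])
          (mul_pos hx1 (stirlingApprox_pos hx)) (mul_stirlingApprox_lt_stirlingApprox_add_one hx)
    _ = Gamma (x + 1) / stirlingApprox x := mul_div_mul_left _ _ hx1.ne'

lemma Gamma_add_nat_add_one {x : ℝ} (hx : 0 < x) (n : ℕ) :
    Gamma (x + n + 1) = Gamma x * ∏ j ∈ Finset.range (n + 1), (x + j) := by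
  induction n with
  | zero => simp [Gamma_add_one hx.ne', mul_comm]
  | succ n ih =>
    rw [Finset.prod_range_succ, ← mul_assoc, ← ih, Nat.cast_succ, ← add_assoc,
      Gamma_add_one (by positivity), mul_comm]

lemma Gamma_add_nat_add_one_eq_div_GammaSeq {x : ℝ} (hx : 0 < x) {n : ℕ} (hn : n ≠ 0) :
    Gamma (x + n + 1) = Gamma x / GammaSeq x n * ((n : ℝ) ^ x * n.factorial) := by
  have hprod : (0 : ℝ) < ∏ j ∈ Finset.range (n + 1), (x + j) :=
    Finset.prod_pos fun j _ => by positivity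
  have hn0 : (0 : ℝ) < n := by positivity
  rw [Gamma_add_nat_add_one hx, GammaSeq]
  field_simp

lemma stirlingApprox_add_nat {x : ℝ} (hx : 0 < x) {n : ℕ} (hn : n ≠ 0) :
    stirlingApprox (x + n) = √π * (√(2 * n) * (n / exp 1) ^ n) * (n : ℝ) ^ x *
      (√(1 + x / n) * ((1 + x / n) ^ n * (1 + x / n) ^ x) / exp x) := by
  have hn0 : (0 : ℝ) < n := by positivity
  have ht : x + n = n * (1 + x / n) := by field_simp; ring
  have hsqrt : √(2 * π * (x + n)) = √π * √(2 * n) * √(1 + x / n) := by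
    rw [ht, show 2 * π * (n * (1 + x / n)) = π * (2 * n) * (1 + x / n) by ring,
      sqrt_mul (by positivity), sqrt_mul pi_pos.le]
  have hpow : ((x + n) / exp 1) ^ (x + n) =
      (n / exp 1) ^ n * n ^ x / exp x * ((1 + x / n) ^ n * (1 + x / n) ^ x) := by
    rw [ht, mul_div_right_comm, mul_rpow (by positivity) (by positivity), ← ht,
      rpow_add (by positivity), rpow_add (by positivity), rpow_natCast, rpow_natCast,
      div_rpow hn0.le (exp_pos 1).le, exp_one_rpow]
    ring
  rw [stirlingApprox, hsqrt, hpow]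
  ring

lemma Gamma_add_nat_add_one_div_stirlingApprox {x : ℝ} (hx : 0 < x) {n : ℕ} (hn : n ≠ 0) :
    Gamma (x + n + 1) / stirlingApprox (x + n) = Gamma x / GammaSeq x n *
      (Stirling.stirlingSeq n / √π) *
        (exp x / (√(1 + x / n) * ((1 + x / n) ^ n * (1 + x / n) ^ x))) := by
  have hn0 : (0 : ℝ) < n := by positivity
  have hfact : (n.factorial : ℝ) = Stirling.stirlingSeq n * (√(2 * n) * (n / exp 1) ^ n) := by
    rw [Stirling.stirlingSeq]; field_simp
  rw [Gamma_add_nat_add_one_eq_div_GammaSeq hx hn, stirlingApprox_add_nat hx hn, hfact]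
  field_simp

lemma tendsto_Gamma_add_nat_add_one_div_stirlingApprox {x : ℝ} (hx : 0 < x) :
    Tendsto (fun n : ℕ => Gamma (x + n + 1) / stirlingApprox (x + n)) atTop (𝓝 1) := by
  have hΓ : Tendsto (fun n => Gamma x / GammaSeq x n) atTop (𝓝 1) := by
    have hne := (Gamma_pos_of_pos hx).ne'
    simpa [div_self hne, Pi.div_def] using
      (tendsto_const_nhds (x := Gamma x)).div (GammaSeq_tendsto_Gamma x) hne
  have hS : Tendsto (fun n => Stirling.stirlingSeq n / √π) atTop (𝓝 1) := by
    simpa [div_self (sqrt_pos.2 pi_pos).ne'] using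
      Stirling.tendsto_stirlingSeq_sqrt_pi.div_const √π
  have ht : Tendsto (fun n : ℕ => 1 + x / n) atTop (𝓝 1) := by
    simpa using tendsto_const_nhds.add (tendsto_const_div_atTop_nhds_zero_nat x)
  have hT : Tendsto (fun n : ℕ => √(1 + x / n) * ((1 + x / n) ^ n * (1 + x / n) ^ x)) atTop
      (𝓝 (exp x)) := by
    simpa using ht.sqrt.mul
      ((tendsto_one_add_div_pow_exp x).mul (ht.rpow_const (Or.inl one_ne_zero)))
  have hE : Tendsto (fun n : ℕ => exp x / (√(1 + x / n) * ((1 + x / n) ^ n * (1 + x / n) ^ x)))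
      atTop (𝓝 1) := by
    simpa [div_self (exp_pos x).ne', Pi.div_def] using
      (tendsto_const_nhds (x := exp x)).div hT (exp_pos x).ne'
  have hlim := (hΓ.mul hS).mul hE
  rw [one_mul, one_mul] at hlim
  refine hlim.congr' ?_
  filter_upwards [eventually_ne_atTop 0] with n hn
  exact (Gamma_add_nat_add_one_div_stirlingApprox hx hn).symm

theorem stirlingApprox_lt_Gamma_add_one {x : ℝ} (hx : 0 < x) :
    stirlingApprox x < Gamma (x + 1) := by
  set r : ℕ → ℝ := fun n => Gamma (x + n + 1) / stirlingApprox (x + n)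
  have hstep : ∀ n, r (n + 1) < r n := fun n => by
    simpa [r, add_assoc] using Gamma_div_stirlingApprox_add_one_lt (x := x + n) (by positivity)
  have h1 : 1 ≤ r 1 := (antitone_nat_of_succ_le fun n => (hstep n).le).le_of_tendsto
    (tendsto_Gamma_add_nat_add_one_div_stirlingApprox hx) 1
  have h0 : 1 < r 0 := h1.trans_lt (hstep 0)
  simpa [r, one_lt_div (stirlingApprox_pos hx)] using h0

section PowerSeries

def powerSeriesSum (a : ℕ → ℝ) (y : ℝ) : ℝ := ∑' n, a n * y ^ n

def derivCoeff (a : ℕ → ℝ) (n : ℕ) : ℝ := (n + 1) * a (n + 1)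

variable {a : ℕ → ℝ} {C A : ℝ}

lemma powerSeriesSum_zero (a : ℕ → ℝ) : powerSeriesSum a 0 = a 0 := by
  rw [powerSeriesSum, tsum_eq_single 0 fun n hn => by simp [hn]]
  simp

lemma summable_mul_pow_of_abs_le (ha : ∀ n, |a n| ≤ C * A ^ n / n.factorial) (y : ℝ) :
    Summable fun n => a n * y ^ n := by
  refine Summable.of_norm_bounded ((summable_pow_div_factorial (A * |y|)).mul_left C)
    fun n => ?_
  calc ‖a n * y ^ n‖ = |a n| * |y| ^ n := by rw [norm_mul, norm_pow, norm_eq_abs, norm_eq_abs]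
    _ ≤ C * A ^ n / n.factorial * |y| ^ n := mul_le_mul_of_nonneg_right (ha n) (by positivity)
    _ = C * ((A * |y|) ^ n / n.factorial) := by ring

lemma abs_derivCoeff_le (ha : ∀ n, |a n| ≤ C * A ^ n / n.factorial) (n : ℕ) :
    |derivCoeff a n| ≤ C * A * A ^ n / n.factorial := by
  rw [derivCoeff, abs_mul, abs_of_pos (by positivity : (0 : ℝ) < n + 1)]
  calc (n + 1) * |a (n + 1)| ≤ (n + 1) * (C * A ^ (n + 1) / (n + 1).factorial) :=
        mul_le_mul_of_nonneg_left (ha _) (by positivity)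
    _ = C * A * A ^ n / n.factorial := by
        rw [Nat.factorial_succ]; push_cast; field_simp; rw [pow_succ]; ring

lemma hasDerivAt_powerSeriesSum (ha : ∀ n, |a n| ≤ C * A ^ n / n.factorial) (y : ℝ) :
    HasDerivAt (powerSeriesSum a) (powerSeriesSum (derivCoeff a) y) y := by
  obtain ⟨R, hyR⟩ : ∃ R, |y| < R := ⟨|y| + 1, lt_add_one _⟩
  set u : ℕ → ℝ := fun n => C * A ^ n / n.factorial * (n * R ^ (n - 1))
  have hu : Summable u := by
    refine (summable_nat_add_iff 1).mp (((summable_pow_div_factorial (A * R)).mul_left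
      (C * A)).congr fun n => ?_)
    simp only [u, Nat.factorial_succ, Nat.add_sub_cancel]
    push_cast
    field_simp
    ring
  have hbound : ∀ n, ∀ z ∈ Metric.ball (0 : ℝ) R, ‖a n * (n * z ^ (n - 1))‖ ≤ u n := by
    intro n z hz
    rw [mem_ball_zero_iff, norm_eq_abs] at hz
    rw [norm_mul, norm_mul, norm_pow, RCLike.norm_natCast, norm_eq_abs, norm_eq_abs]
    exact mul_le_mul (ha n) (mul_le_mul_of_nonneg_left (pow_le_pow_left₀ (abs_nonneg z) hz.le _)
      (by positivity)) (by positivity) ((abs_nonneg _).trans (ha n))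
  have hderiv := hasDerivAt_tsum_of_isPreconnected (g := fun n z => a n * z ^ n)
    (g' := fun n z => a n * (n * z ^ (n - 1))) (y := y) hu Metric.isOpen_ball
    (convex_ball 0 R).isPreconnected (fun n z _ => (hasDerivAt_pow n z).const_mul (a n)) hbound
    (Metric.mem_ball_self ((abs_nonneg y).trans_lt hyR)) (summable_mul_pow_of_abs_le ha 0)
    (mem_ball_zero_iff.2 hyR)
  refine hderiv.congr_deriv ?_
  have hshift : ∀ n : ℕ,
      a (n + 1) * ((n + 1 : ℕ) * y ^ (n + 1 - 1)) = derivCoeff a n * y ^ n :=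
    fun n => by simp only [derivCoeff, Nat.add_sub_cancel]; push_cast; ring
  rw [tsum_eq_zero_add' ?_] <;> simp only [hshift]
  · simp [powerSeriesSum]
  · exact summable_mul_pow_of_abs_le (abs_derivCoeff_le ha) y

lemma hasSum_natCast_mul_mul_pow {y : ℝ} (hs : Summable fun n => derivCoeff a n * y ^ n) :
    HasSum (fun n : ℕ => n * a n * y ^ n) (y * powerSeriesSum (derivCoeff a) y) := by
  have hshift : ∀ n : ℕ,
      y * (derivCoeff a n * y ^ n) = ((n + 1 : ℕ) : ℝ) * a (n + 1) * y ^ (n + 1) :=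
    fun n => by rw [derivCoeff]; push_cast; ring
  have h := hs.hasSum.mul_left y
  simp only [hshift] at h
  have h2 := (hasSum_nat_add_iff (f := fun n : ℕ => (n : ℝ) * a n * y ^ n) 1).mp h
  simpa [powerSeriesSum] using h2

end PowerSeries

section BesselSeries

def besselCoeff (ν : ℝ) (m : ℕ) : ℝ := (-1) ^ m / (m.factorial * Gamma (m + ν + 1))

variable {ν : ℝ}

lemma Gamma_add_one_le_Gamma_nat_add_add_one (hν : 0 ≤ ν) (m : ℕ) :
    Gamma (ν + 1) ≤ Gamma (m + ν + 1) := by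
  induction m with
  | zero => simp
  | succ m ih =>
    have hm : 1 ≤ (m : ℝ) + ν + 1 := by linarith [(m.cast_nonneg : (0 : ℝ) ≤ m)]
    have hΓ := Gamma_pos_of_pos (by linarith : (0 : ℝ) < m + ν + 1)
    rw [show ((m + 1 : ℕ) : ℝ) + ν + 1 = m + ν + 1 + 1 by push_cast; ring,
      Gamma_add_one (by linarith : (m : ℝ) + ν + 1 ≠ 0)]
    nlinarith

-- The bound has the shape `C * A ^ m / m!` (with `A = 1`) taken by the power-series lemmas.
lemma abs_besselCoeff_le (hν : 0 ≤ ν) (m : ℕ) :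
    |besselCoeff ν m| ≤ (Gamma (ν + 1))⁻¹ * 1 ^ m / m.factorial := by
  have hΓ := Gamma_pos_of_pos (by linarith : 0 < ν + 1)
  rw [besselCoeff, abs_div, abs_pow, abs_neg, abs_one, one_pow,
    abs_of_pos (by positivity [(Gamma_pos_of_pos hΓ).le])]
  calc 1 / (m.factorial * Gamma (m + ν + 1)) ≤ 1 / (m.factorial * Gamma (ν + 1)) :=
        one_div_le_one_div_of_le (by positivity)
          (mul_le_mul_of_nonneg_left (Gamma_add_one_le_Gamma_nat_add_add_one hν m) (by positivity))
    _ = (Gamma (ν + 1))⁻¹ * 1 / m.factorial := by field_simp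

lemma add_mul_derivCoeff_besselCoeff (hν : -1 < ν) (m : ℕ) :
    (m + ν + 1) * derivCoeff (besselCoeff ν) m = -besselCoeff ν m := by
  have hm : 0 < (m : ℝ) + ν + 1 := by linarith [(m.cast_nonneg : (0 : ℝ) ≤ m)]
  have hΓ := Gamma_pos_of_pos hm
  rw [derivCoeff, besselCoeff, besselCoeff, Nat.factorial_succ, Nat.cast_succ,
    add_right_comm (m : ℝ) 1, Gamma_add_one hm.ne', pow_succ]
  push_cast
  field_simp

lemma powerSeriesSum_besselCoeff_ode (hν : 0 ≤ ν) (y : ℝ) :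
    y * powerSeriesSum (derivCoeff (derivCoeff (besselCoeff ν))) y +
      (ν + 1) * powerSeriesSum (derivCoeff (besselCoeff ν)) y +
        powerSeriesSum (besselCoeff ν) y = 0 := by
  have hc := abs_besselCoeff_le hν
  have h2 := hasSum_natCast_mul_mul_pow
    (summable_mul_pow_of_abs_le (abs_derivCoeff_le (abs_derivCoeff_le hc)) y)
  have h1 := (summable_mul_pow_of_abs_le (abs_derivCoeff_le hc) y).hasSum.mul_left (ν + 1)
  have h0 := (summable_mul_pow_of_abs_le hc y).hasSum
  refine ((h2.add h1).add h0).unique ?_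
  convert hasSum_zero with n
  linear_combination y ^ n * add_mul_derivCoeff_besselCoeff (by linarith) n

lemma antitone_powerSeriesSum_besselCoeff_energy (hν : 0 ≤ ν) :
    Antitone fun y => powerSeriesSum (besselCoeff ν) y ^ 2 +
      y * powerSeriesSum (derivCoeff (besselCoeff ν)) y ^ 2 := by
  have hc := abs_besselCoeff_le hν
  have hderiv : ∀ y, HasDerivAt (fun y => powerSeriesSum (besselCoeff ν) y ^ 2 +
      y * powerSeriesSum (derivCoeff (besselCoeff ν)) y ^ 2)
        (-(2 * ν + 1) * powerSeriesSum (derivCoeff (besselCoeff ν)) y ^ 2) y := fun y => by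
    have h := ((hasDerivAt_powerSeriesSum hc y).pow 2).add
      ((hasDerivAt_id y).mul ((hasDerivAt_powerSeriesSum (abs_derivCoeff_le hc) y).pow 2))
    refine h.congr_deriv ?_
    simp only [id, Pi.pow_apply, Nat.cast_ofNat]
    linear_combination
      (2 * powerSeriesSum (derivCoeff (besselCoeff ν)) y) * powerSeriesSum_besselCoeff_ode hν y
  refine antitone_of_deriv_nonpos (fun y => (hderiv y).differentiableAt) fun y => ?_
  rw [(hderiv y).deriv]
  nlinarith [sq_nonneg (powerSeriesSum (derivCoeff (besselCoeff ν)) y)]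

lemma sq_powerSeriesSum_besselCoeff_le (hν : 0 ≤ ν) {y : ℝ} (hy : 0 ≤ y) :
    powerSeriesSum (besselCoeff ν) y ^ 2 ≤ (Gamma (ν + 1) ^ 2)⁻¹ := by
  have h := antitone_powerSeriesSum_besselCoeff_energy hν hy
  norm_num [powerSeriesSum_zero, besselCoeff] at h
  nlinarith [mul_nonneg hy (sq_nonneg (powerSeriesSum (derivCoeff (besselCoeff ν)) y))]

lemma besselJ_eq_rpow_mul_powerSeriesSum {x : ℝ} (hx : 0 < x) :
    besselJ ν x = (x / 2) ^ ν * powerSeriesSum (besselCoeff ν) (x ^ 2 / 4) := by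
  rw [besselJ, powerSeriesSum, ← tsum_mul_left]
  congr 1 with m
  rw [besselCoeff, rpow_add (by positivity), show 2 * (m : ℝ) = (2 * m : ℕ) by push_cast; ring,
    rpow_natCast, pow_mul, div_pow]
  ring

lemma besselJ_sq_le (hν : 0 ≤ ν) {x : ℝ} (hx : 0 < x) :
    besselJ ν x ^ 2 ≤ (x / 2) ^ (2 * ν) / Gamma (ν + 1) ^ 2 := by
  rw [besselJ_eq_rpow_mul_powerSeriesSum hx, mul_pow, show 2 * ν = ν * (2 : ℕ) by push_cast; ring,
    rpow_mul_natCast (by positivity), div_eq_mul_inv]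
  exact mul_le_mul_of_nonneg_left (sq_powerSeriesSum_besselCoeff_le hν (by positivity))
    (by positivity)

lemma continuousOn_besselJ (hν : 0 ≤ ν) : ContinuousOn (besselJ ν) (Set.Ioi 0) := by
  have hg : Continuous (powerSeriesSum (besselCoeff ν)) := continuous_iff_continuousAt.2 fun y =>
    (hasDerivAt_powerSeriesSum (abs_besselCoeff_le hν) y).continuousAt
  refine Continuous.continuousOn (((continuous_id.div_const 2).rpow_const fun _ => Or.inr hν).mul
    (hg.comp (by fun_prop))) |>.congr fun x hx => besselJ_eq_rpow_mul_powerSeriesSum hx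

end BesselSeries

lemma setIntegral_inv_mul_besselJ_sq_le {ν z : ℝ} (hν : 0 < ν) (hz : 0 ≤ z) :
    ∫ t in Set.Ioc 0 z, t⁻¹ * besselJ ν t ^ 2 ≤
      (z / 2) ^ (2 * ν) / (2 * ν * Gamma (ν + 1) ^ 2) := by
  obtain ⟨K, hK⟩ : ∃ K : ℝ, K = (2 ^ (2 * ν) * Gamma (ν + 1) ^ 2)⁻¹ := ⟨_, rfl⟩
  have hbound : ∀ t ∈ Set.Ioc 0 z, t⁻¹ * besselJ ν t ^ 2 ≤ K * t ^ (2 * ν - 1) := by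
    intro t ht
    calc t⁻¹ * besselJ ν t ^ 2 ≤ t⁻¹ * ((t / 2) ^ (2 * ν) / Gamma (ν + 1) ^ 2) :=
          mul_le_mul_of_nonneg_left (besselJ_sq_le hν.le ht.1) (inv_nonneg.2 ht.1.le)
      _ = K * t ^ (2 * ν - 1) := by
          rw [hK, div_rpow ht.1.le zero_le_two, rpow_sub_one ht.1.ne']
          ring
  have hKint : IntegrableOn (fun t => K * t ^ (2 * ν - 1)) (Set.Ioc 0 z) :=
    ((intervalIntegrable_iff_integrableOn_Ioc_of_le hz).1
      (intervalIntegral.intervalIntegrable_rpow' (by linarith))).const_mul K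
  have hint : IntegrableOn (fun t => t⁻¹ * besselJ ν t ^ 2) (Set.Ioc 0 z) := by
    refine hKint.mono' (ContinuousOn.aestronglyMeasurable ?_ measurableSet_Ioc) ?_
    · exact (continuousOn_inv₀.mono fun t ht => ht.1.ne').mul
        (((continuousOn_besselJ hν.le).mono fun t ht => ht.1).pow 2)
    · refine (ae_restrict_iff' measurableSet_Ioc).2 (ae_of_all _ fun t ht => ?_)
      rw [norm_of_nonneg (mul_nonneg (inv_nonneg.2 ht.1.le) (sq_nonneg _))]
      exact hbound t ht
  calc ∫ t in Set.Ioc 0 z, t⁻¹ * besselJ ν t ^ 2 ≤ ∫ t in Set.Ioc 0 z, K * t ^ (2 * ν - 1) :=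
        setIntegral_mono_on hint hKint measurableSet_Ioc hbound
    _ = K * (z ^ (2 * ν) / (2 * ν)) := by
        rw [integral_const_mul, ← intervalIntegral.integral_of_le hz,
          integral_rpow (Or.inl (by linarith)), sub_add_cancel, zero_rpow (by positivity),
          sub_zero]
    _ = (z / 2) ^ (2 * ν) / (2 * ν * Gamma (ν + 1) ^ 2) := by
        rw [hK, div_rpow hz zero_le_two]
        field_simp

lemma rpow_div_mul_stirlingApprox_sq {ν : ℝ} (hν : 0 < ν) (z : ℝ) (hz : 0 ≤ z) :
    (z / 2) ^ (2 * ν) / (2 * ν * stirlingApprox ν ^ 2) =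
      1 / (4 * π * ν ^ 2) * (exp 1 * z / (2 * ν)) ^ (2 * ν) := by
  have hS : stirlingApprox ν ^ 2 = 2 * π * ν * (ν / exp 1) ^ (2 * ν) := by
    rw [stirlingApprox, mul_pow, sq_sqrt (by positivity),
      show 2 * ν = ν * (2 : ℕ) by push_cast; ring, rpow_mul_natCast (by positivity)]
  rw [hS, show exp 1 * z / (2 * ν) = (z / 2) / (ν / exp 1) by field_simp,
    div_rpow (div_nonneg hz zero_le_two) (div_pos hν (exp_pos 1)).le]
  field_simp
  ring

/-- **Bound on the low-frequency Bessel integral:**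
for `ν > 0` and `z > 0`, `∫₀^z t⁻¹ J_ν(t)² dt < (1/(4πν²)) (ez/(2ν))^{2ν}`. -/
theorem besselJ_integral_near_zero_lt (ν z : ℝ) (hν : 0 < ν) (hz : 0 < z) :
    ∫ t in Set.Ioc (0 : ℝ) z, t⁻¹ * (besselJ ν t) ^ 2 <
      (1 / (4 * Real.pi * ν ^ 2)) * (Real.exp 1 * z / (2 * ν)) ^ (2 * ν) := by
  have hS_pos := stirlingApprox_pos hν
  calc ∫ t in Set.Ioc 0 z, t⁻¹ * besselJ ν t ^ 2
      ≤ (z / 2) ^ (2 * ν) / (2 * ν * Gamma (ν + 1) ^ 2) :=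
        setIntegral_inv_mul_besselJ_sq_le hν hz.le
    _ < (z / 2) ^ (2 * ν) / (2 * ν * stirlingApprox ν ^ 2) := by
        gcongr
        exact stirlingApprox_lt_Gamma_add_one hν
    _ = _ := rpow_div_mul_stirlingApprox_sq hν z hz.le

end
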